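/- (Per-step bound, eq. (18)) Let W, S_1, …, S_{t+1}, Y_1, …, Y_t be finite-valued random variables such that (i) W is conditionally independent of S_{t+1} given (S_{[t]}, Y_{[t]}) and (ii) Y_t is conditionally independent of Y_{[t−1]} given (W, S_{[t]}). Then I(W ; Y_t, S_{t+1} | Y_{[t−1]}, S_{[t]}) ≤ I(W ; Y_t | S_{[t]}). -/
import Mathlib


open Finset

namespace mac

section InfoTheory

variable {Ω A B C : Type} [Fintype Ω]

open Classical in
/-- The probability that the random variable `X` takes the value `a`, under the
probability mass function `p` on the finite sample space `Ω`. -/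
noncomputable def distOf (p : Ω → ℝ) (X : Ω → A) (a : A) : ℝ :=
  ∑ ω ∈ Finset.univ.filter (fun ω => X ω = a), p ω

/-- Base-2 Shannon entropy of the random variable `X` under the pmf `p`. -/
noncomputable def ent [Fintype A] (p : Ω → ℝ) (X : Ω → A) : ℝ :=
  -∑ a, distOf p X a * Real.logb 2 (distOf p X a)

/-- Conditional entropy `H(X | Z) = H(X, Z) - H(Z)`. -/
noncomputable def condEnt [Fintype A] [Fintype B] (p : Ω → ℝ) (X : Ω → A) (Z : Ω → B) : ℝ :=
  ent p (fun ω => (X ω, Z ω)) - ent p Z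

/-- Conditional mutual information `I(X ; Y | Z) = H(X | Z) - H(X | Y, Z)`. -/
noncomputable def condMI [Fintype A] [Fintype B] [Fintype C]
    (p : Ω → ℝ) (X : Ω → A) (Y : Ω → B) (Z : Ω → C) : ℝ :=
  condEnt p X Z - condEnt p X (fun ω => (Y ω, Z ω))

/-- Mutual information `I(X ; Y) = H(X) - H(X | Y)`. -/
noncomputable def mi [Fintype A] [Fintype B] (p : Ω → ℝ) (X : Ω → A) (Y : Ω → B) : ℝ :=
  ent p X - condEnt p X Y

/-- `p` is a probability mass function on the finite sample space `Ω`. -/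
def IsPMF (p : Ω → ℝ) : Prop := (∀ ω, 0 ≤ p ω) ∧ ∑ ω, p ω = 1

/-- Independence of the random variables `X` and `Y` under the pmf `p`. -/
def Indep (p : Ω → ℝ) (X : Ω → A) (Y : Ω → B) : Prop :=
  ∀ a b, distOf p (fun ω => (X ω, Y ω)) (a, b) = distOf p X a * distOf p Y b

/-- Conditional independence of `X` and `Y` given `Z`, under the pmf `p`:
`P(X = a, Y = b, Z = c) * P(Z = c) = P(X = a, Z = c) * P(Y = b, Z = c)`. -/
def CondIndep (p : Ω → ℝ) (X : Ω → A) (Y : Ω → B) (Z : Ω → C) : Prop :=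
  ∀ a b c, distOf p (fun ω => (X ω, Y ω, Z ω)) (a, b, c) * distOf p Z c =
    distOf p (fun ω => (X ω, Z ω)) (a, c) * distOf p (fun ω => (Y ω, Z ω)) (b, c)

end InfoTheory

/-- Binary entropy function `H(x) = -x log₂ x - (1 - x) log₂ (1 - x)`. -/
noncomputable def binEnt (x : ℝ) : ℝ := -(x * Real.logb 2 x) - (1 - x) * Real.logb 2 (1 - x)

/-- `η(ε) = (ε / (1 - ε)) log₂ |𝒴| + H(ε) / (1 - ε)`, where `k = |𝒴|`. -/
noncomputable def eta (k : ℕ) (ε : ℝ) : ℝ :=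
  ε / (1 - ε) * Real.logb 2 (k : ℝ) + binEnt ε / (1 - ε)

section Aux

open Classical
variable {Ω A B C D E : Type} [Fintype Ω] {p : Ω → ℝ}

lemma distOf_ite (X : Ω → A) (a : A) :
    distOf p X a = ∑ ω, if X ω = a then p ω else 0 := by
  rw [distOf, Finset.sum_filter]

lemma distOf_nonneg' (hp : ∀ ω, 0 ≤ p ω) (X : Ω → A) (a : A) : 0 ≤ distOf p X a := by
  rw [distOf_ite]
  exact Finset.sum_nonneg fun ω _ => by split <;> simp [hp ω]

lemma sum_distOf [Fintype A] (X : Ω → A) : ∑ a, distOf p X a = ∑ ω, p ω := by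
  simp only [distOf_ite]
  rw [Finset.sum_comm]
  simp

lemma distOf_inj {g : B → A} (hg : Function.Injective g) (X : Ω → B) (b : B) :
    distOf p (fun ω => g (X ω)) (g b) = distOf p X b := by
  simp only [distOf_ite, hg.eq_iff]

lemma distOf_fiber [Fintype B] (X : Ω → B) (g : B → A) (a : A) :
    distOf p (fun ω => g (X ω)) a
      = ∑ b ∈ Finset.univ.filter (fun b => g b = a), distOf p X b := by
  simp only [distOf_ite]
  rw [Finset.sum_comm]
  refine Finset.sum_congr rfl fun ω _ => ?_
  rw [Finset.sum_ite_eq]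
  simp

lemma ent_inj [Fintype A] [Fintype B] {g : B → A} (hg : Function.Injective g) (X : Ω → B) :
    ent p (fun ω => g (X ω)) = ent p X := by
  rw [ent, ent, neg_inj]
  rw [← Finset.sum_subset (Finset.subset_univ ((Finset.univ : Finset B).image g))
      (fun a _ ha => ?_),
    Finset.sum_image (fun x _ y _ h => hg h)]
  · exact Finset.sum_congr rfl fun b _ => by rw [distOf_inj hg]
  · have hz : distOf p (fun ω => g (X ω)) a = 0 := by
      rw [distOf_ite]
      refine Finset.sum_eq_zero fun ω _ => ?_
      have : g (X ω) ≠ a := fun h => ha (Finset.mem_image.2 ⟨X ω, Finset.mem_univ _, h⟩)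
      simp [this]
    simp [hz]

lemma ent_flatten [Fintype A] [Fintype B] (T : Ω → B) (g : B → A) :
    ent p (fun ω => g (T ω))
      = -∑ b, distOf p T b * Real.logb 2 (distOf p (fun ω => g (T ω)) (g b)) := by
  rw [ent, neg_inj]
  rw [← Finset.sum_fiberwise_of_maps_to (t := Finset.univ) (g := g)
      (fun b _ => Finset.mem_univ (g b))
      (fun b => distOf p T b * Real.logb 2 (distOf p (fun ω => g (T ω)) (g b)))]
  refine Finset.sum_congr rfl fun a _ => ?_
  have h1 : ∑ b ∈ Finset.univ.filter (fun b => g b = a),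
        distOf p T b * Real.logb 2 (distOf p (fun ω => g (T ω)) (g b))
      = ∑ b ∈ Finset.univ.filter (fun b => g b = a),
        distOf p T b * Real.logb 2 (distOf p (fun ω => g (T ω)) a) :=
    Finset.sum_congr rfl fun b hb => by rw [(Finset.mem_filter.1 hb).2]
  rw [h1, ← Finset.sum_mul, ← distOf_fiber]

lemma distOf_fst_marg [Fintype B] (X : Ω → A) (Y : Ω → B) (a : A) :
    distOf p X a = ∑ b, distOf p (fun ω => (X ω, Y ω)) (a, b) := by
  simp only [distOf_ite]
  rw [Finset.sum_comm]
  refine Finset.sum_congr rfl fun ω _ => ?_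
  by_cases h : X ω = a <;> simp [Prod.ext_iff, h]

lemma distOf_snd_marg [Fintype A] (X : Ω → A) (Y : Ω → B) (b : B) :
    distOf p Y b = ∑ a, distOf p (fun ω => (X ω, Y ω)) (a, b) := by
  simp only [distOf_ite]
  rw [Finset.sum_comm]
  refine Finset.sum_congr rfl fun ω _ => ?_
  by_cases h : Y ω = b <;> simp [Prod.ext_iff, h]

lemma distOf_mid_marg [Fintype B] (X : Ω → A) (Y : Ω → B) (Z : Ω → C) (a : A) (c : C) :
    distOf p (fun ω => (X ω, Z ω)) (a, c)
      = ∑ b, distOf p (fun ω => (X ω, Y ω, Z ω)) (a, b, c) := by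
  simp only [distOf_ite]
  rw [Finset.sum_comm]
  refine Finset.sum_congr rfl fun ω _ => ?_
  by_cases h1 : X ω = a <;> by_cases h2 : Z ω = c <;> simp [Prod.ext_iff, h1, h2]

end Aux

section Aux2

open Classical
variable {Ω A B C D E : Type} [Fintype Ω] {p : Ω → ℝ}

lemma condMI_repr [Fintype A] [Fintype B] [Fintype C] (X : Ω → A) (Y : Ω → B) (Z : Ω → C) :
    condMI p X Y Z = ∑ t : A × B × C,
      distOf p (fun ω => (X ω, Y ω, Z ω)) t *
        (Real.logb 2 (distOf p (fun ω => (X ω, Y ω, Z ω)) t)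
         + Real.logb 2 (distOf p Z t.2.2)
         - Real.logb 2 (distOf p (fun ω => (X ω, Z ω)) (t.1, t.2.2))
         - Real.logb 2 (distOf p (fun ω => (Y ω, Z ω)) (t.2.1, t.2.2))) := by
  have h0 : ent p (fun ω => (X ω, Y ω, Z ω))
      = -∑ t : A × B × C, distOf p (fun ω => (X ω, Y ω, Z ω)) t *
          Real.logb 2 (distOf p (fun ω => (X ω, Y ω, Z ω)) t) :=
    ent_flatten (fun ω => (X ω, Y ω, Z ω)) (fun t => t)
  have h1 : ent p (fun ω => (X ω, Z ω))
      = -∑ t : A × B × C, distOf p (fun ω => (X ω, Y ω, Z ω)) t *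
          Real.logb 2 (distOf p (fun ω => (X ω, Z ω)) (t.1, t.2.2)) :=
    ent_flatten (fun ω => (X ω, Y ω, Z ω)) (fun t => (t.1, t.2.2))
  have h2 : ent p Z
      = -∑ t : A × B × C, distOf p (fun ω => (X ω, Y ω, Z ω)) t *
          Real.logb 2 (distOf p Z t.2.2) :=
    ent_flatten (fun ω => (X ω, Y ω, Z ω)) (fun t => t.2.2)
  have h4 : ent p (fun ω => (Y ω, Z ω))
      = -∑ t : A × B × C, distOf p (fun ω => (X ω, Y ω, Z ω)) t *
          Real.logb 2 (distOf p (fun ω => (Y ω, Z ω)) (t.2.1, t.2.2)) :=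
    ent_flatten (fun ω => (X ω, Y ω, Z ω)) (fun t => (t.2.1, t.2.2))
  rw [condMI, condEnt, condEnt, h0, h1, h2, h4]
  simp only [mul_add, mul_sub, Finset.sum_add_distrib, Finset.sum_sub_distrib]
  ring

lemma condMI_of_condIndep [Fintype A] [Fintype B] [Fintype C] (hp : IsPMF p)
    {X : Ω → A} {Y : Ω → B} {Z : Ω → C} (h : CondIndep p X Y Z) :
    condMI p X Y Z = 0 := by
  rw [condMI_repr]
  refine Finset.sum_eq_zero fun t _ => ?_
  obtain ⟨a, b, c⟩ := t
  rcases eq_or_lt_of_le (distOf_nonneg' hp.1 (fun ω => (X ω, Y ω, Z ω)) (a, b, c)) with hq | hq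
  · rw [← hq, zero_mul]
  · have hxz : 0 < distOf p (fun ω => (X ω, Z ω)) (a, c) := by
      refine lt_of_lt_of_le hq ?_
      rw [distOf_mid_marg X Y Z a c]
      exact Finset.single_le_sum (f := fun b => distOf p (fun ω => (X ω, Y ω, Z ω)) (a, b, c))
        (fun b _ => distOf_nonneg' hp.1 _ _) (Finset.mem_univ b)
    have hyz : 0 < distOf p (fun ω => (Y ω, Z ω)) (b, c) := by
      refine lt_of_lt_of_le hq ?_
      rw [distOf_snd_marg X (fun ω => (Y ω, Z ω)) (b, c)]
      exact Finset.single_le_sum (f := fun a => distOf p (fun ω => (X ω, Y ω, Z ω)) (a, b, c))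
        (fun a _ => distOf_nonneg' hp.1 _ _) (Finset.mem_univ a)
    have hz : 0 < distOf p Z c := by
      refine lt_of_lt_of_le hyz ?_
      rw [distOf_snd_marg Y Z c]
      exact Finset.single_le_sum (f := fun b => distOf p (fun ω => (Y ω, Z ω)) (b, c))
        (fun b _ => distOf_nonneg' hp.1 _ _) (Finset.mem_univ b)
    have key := h a b c
    have hlog : Real.logb 2 (distOf p (fun ω => (X ω, Y ω, Z ω)) (a, b, c))
          + Real.logb 2 (distOf p Z c)
        = Real.logb 2 (distOf p (fun ω => (X ω, Z ω)) (a, c))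
          + Real.logb 2 (distOf p (fun ω => (Y ω, Z ω)) (b, c)) := by
      rw [← Real.logb_mul hq.ne' hz.ne', ← Real.logb_mul hxz.ne' hyz.ne', key]
    have : Real.logb 2 (distOf p (fun ω => (X ω, Y ω, Z ω)) (a, b, c))
          + Real.logb 2 (distOf p Z c)
          - Real.logb 2 (distOf p (fun ω => (X ω, Z ω)) (a, c))
          - Real.logb 2 (distOf p (fun ω => (Y ω, Z ω)) (b, c)) = 0 := by linarith
    rw [this, mul_zero]

end Aux2

section Aux3

open Classical
variable {Ω A B C D E : Type} [Fintype Ω] {p : Ω → ℝ}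

lemma condMI_nonneg [Fintype A] [Fintype B] [Fintype C] (hp : IsPMF p)
    (X : Ω → A) (Y : Ω → B) (Z : Ω → C) : 0 ≤ condMI p X Y Z := by
  rw [condMI_repr]
  set q : A × B × C → ℝ := distOf p (fun ω => (X ω, Y ω, Z ω)) with hqdef
  set dXZ : A × C → ℝ := distOf p (fun ω => (X ω, Z ω)) with hxzdef
  set dYZ : B × C → ℝ := distOf p (fun ω => (Y ω, Z ω)) with hyzdef
  set dZ : C → ℝ := distOf p Z with hzdef
  set F : A × B × C → ℝ := fun t =>
    q t * (Real.logb 2 (q t) + Real.logb 2 (dZ t.2.2)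
      - Real.logb 2 (dXZ (t.1, t.2.2)) - Real.logb 2 (dYZ (t.2.1, t.2.2))) with hFdef
  have hL2 : (0:ℝ) < Real.log 2 := Real.log_pos (by norm_num)
  have hq0 : ∀ t, 0 ≤ q t := fun t => distOf_nonneg' hp.1 _ t
  have hxz0 : ∀ t, 0 ≤ dXZ t := fun t => distOf_nonneg' hp.1 _ t
  have hyz0 : ∀ t, 0 ≤ dYZ t := fun t => distOf_nonneg' hp.1 _ t
  have hz0 : ∀ c, 0 ≤ dZ c := fun c => distOf_nonneg' hp.1 _ c
  set G : A × B × C → ℝ := fun t =>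
    if dZ t.2.2 = 0 then 0 else dXZ (t.1, t.2.2) * dYZ (t.2.1, t.2.2) / dZ t.2.2 with hGdef
  have hG0 : ∀ t, 0 ≤ G t := by
    intro t
    rw [hGdef]
    dsimp only
    split
    · exact le_refl 0
    · exact div_nonneg (mul_nonneg (hxz0 _) (hyz0 _)) (hz0 _)
  have hmargXZ : ∀ c, ∑ a, dXZ (a, c) = dZ c := fun c => (distOf_snd_marg X Z c).symm
  have hmargYZ : ∀ c, ∑ b, dYZ (b, c) = dZ c := fun c => (distOf_snd_marg Y Z c).symm
  -- per-term bound
  have key : ∀ t : A × B × C, -F t ≤ (G t - q t) / Real.log 2 := by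
    rintro ⟨a, b, c⟩
    simp only [hFdef]
    rcases eq_or_lt_of_le (hq0 (a, b, c)) with hq | hq
    · rw [← hq]
      simp only [zero_mul, neg_zero, sub_zero]
      exact div_nonneg (hG0 (a, b, c)) hL2.le
    · have hxz : 0 < dXZ (a, c) := by
        refine lt_of_lt_of_le hq ?_
        rw [hxzdef, hqdef, distOf_mid_marg X Y Z a c]
        exact Finset.single_le_sum (f := fun b => distOf p (fun ω => (X ω, Y ω, Z ω)) (a, b, c))
          (fun b _ => distOf_nonneg' hp.1 _ _) (Finset.mem_univ b)
      have hyz : 0 < dYZ (b, c) := by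
        refine lt_of_lt_of_le hq ?_
        rw [hyzdef, hqdef, distOf_snd_marg X (fun ω => (Y ω, Z ω)) (b, c)]
        exact Finset.single_le_sum (f := fun a => distOf p (fun ω => (X ω, Y ω, Z ω)) (a, b, c))
          (fun a _ => distOf_nonneg' hp.1 _ _) (Finset.mem_univ a)
      have hz : 0 < dZ c := by
        refine lt_of_lt_of_le hyz ?_
        rw [hzdef, hyzdef, distOf_snd_marg Y Z c]
        exact Finset.single_le_sum (f := fun b => distOf p (fun ω => (Y ω, Z ω)) (b, c))
          (fun b _ => distOf_nonneg' hp.1 _ _) (Finset.mem_univ b)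
      have hGt : G (a, b, c) = dXZ (a, c) * dYZ (b, c) / dZ c := by
        rw [hGdef]; exact if_neg hz.ne'
      set r : ℝ := dXZ (a, c) * dYZ (b, c) / (q (a, b, c) * dZ c) with hrdef
      have hr : 0 < r := by
        rw [hrdef]; exact div_pos (mul_pos hxz hyz) (mul_pos hq hz)
      have hqr : q (a, b, c) * r = G (a, b, c) := by
        rw [hGt, hrdef]; field_simp
      have hlhs : -(q (a, b, c) * (Real.logb 2 (q (a, b, c)) + Real.logb 2 (dZ c)
            - Real.logb 2 (dXZ (a, c)) - Real.logb 2 (dYZ (b, c))))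
          = q (a, b, c) * (Real.log r / Real.log 2) := by
        rw [hrdef, Real.log_div (mul_pos hxz hyz).ne' (mul_pos hq hz).ne',
          Real.log_mul hxz.ne' hyz.ne', Real.log_mul hq.ne' hz.ne']
        simp only [Real.logb]
        field_simp
        ring
      calc -(q (a, b, c) * (Real.logb 2 (q (a, b, c)) + Real.logb 2 (dZ c)
            - Real.logb 2 (dXZ (a, c)) - Real.logb 2 (dYZ (b, c))))
          = q (a, b, c) * (Real.log r / Real.log 2) := hlhs
        _ ≤ q (a, b, c) * ((r - 1) / Real.log 2) := by
            have := Real.log_le_sub_one_of_pos hr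
            gcongr
        _ = (G (a, b, c) - q (a, b, c)) / Real.log 2 := by
            rw [← hqr]; field_simp
  have hqsum : ∑ t : A × B × C, q t = 1 := by
    rw [hqdef, sum_distOf]; exact hp.2
  have hGsum : ∑ t : A × B × C, G t ≤ 1 := by
    have hexp : ∑ t : A × B × C, G t = ∑ c, ∑ a, ∑ b, G (a, b, c) := by
      rw [Fintype.sum_prod_type]
      simp only [Fintype.sum_prod_type]
      calc ∑ a, ∑ b, ∑ c, G (a, b, c)
          = ∑ a, ∑ c, ∑ b, G (a, b, c) := Finset.sum_congr rfl fun a _ => Finset.sum_comm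
        _ = ∑ c, ∑ a, ∑ b, G (a, b, c) := Finset.sum_comm
    rw [hexp]
    have hc : ∀ c, ∑ a, ∑ b, G (a, b, c) ≤ dZ c := by
      intro c
      by_cases hzc : dZ c = 0
      · have hG00 : ∀ a b, G (a, b, c) = 0 := by intro a b; simp [hGdef, hzc]
        simp only [hG00, Finset.sum_const_zero]
        exact hz0 c
      · simp only [hGdef]
        rw [Finset.sum_congr rfl fun a _ => Finset.sum_congr rfl fun b _ => if_neg hzc]
        have hA : ∀ a, ∑ b, dXZ (a, c) * dYZ (b, c) / dZ c = dXZ (a, c) := by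
          intro a
          rw [← Finset.sum_div, ← Finset.mul_sum, hmargYZ c, mul_div_assoc,
            div_self hzc, mul_one]
        rw [Finset.sum_congr rfl fun a _ => hA a, hmargXZ c]
    calc ∑ c, ∑ a, ∑ b, G (a, b, c) ≤ ∑ c, dZ c := Finset.sum_le_sum fun c _ => hc c
      _ = 1 := by rw [hzdef, sum_distOf]; exact hp.2
  have hA : ∑ t : A × B × C, -F t ≤ ∑ t : A × B × C, (G t - q t) / Real.log 2 :=
    Finset.sum_le_sum fun t _ => key t
  have hB : ∑ t : A × B × C, (G t - q t) / Real.log 2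
      = (∑ t : A × B × C, G t - 1) / Real.log 2 := by
    rw [← Finset.sum_div, Finset.sum_sub_distrib, hqsum]
  have hC : (∑ t : A × B × C, G t - 1) / Real.log 2 ≤ 0 :=
    div_nonpos_of_nonpos_of_nonneg (by linarith) hL2.le
  have hD : ∑ t : A × B × C, -F t = -∑ t : A × B × C, F t := by
    rw [Finset.sum_neg_distrib]
  linarith [hA.trans (hB.le.trans hC)]

end Aux3

section Aux4

open Classical
variable {Ω A B C D E F' : Type} [Fintype Ω] {p : Ω → ℝ}

lemma condMI_comm [Fintype A] [Fintype B] [Fintype C]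
    (X : Ω → A) (Y : Ω → B) (Z : Ω → C) : condMI p X Y Z = condMI p Y X Z := by
  have hswap : Function.Injective (fun t : A × B × C => (t.2.1, t.1, t.2.2)) := by
    rintro ⟨a, b, c⟩ ⟨a', b', c'⟩ h
    simp only [Prod.mk.injEq] at h ⊢
    tauto
  have h : ent p (fun ω => (Y ω, X ω, Z ω)) = ent p (fun ω => (X ω, Y ω, Z ω)) :=
    ent_inj hswap (fun ω => (X ω, Y ω, Z ω))
  have hxy : Function.Injective (fun t : A × C => (t.2, t.1)) := by
    rintro ⟨a, c⟩ ⟨a', c'⟩ h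
    simp only [Prod.mk.injEq] at h ⊢
    tauto
  rw [condMI, condMI, condEnt, condEnt, condEnt, condEnt, h]
  ring

lemma condEnt_comp [Fintype A] [Fintype B] [Fintype C] {g : B → C}
    (hg : Function.Injective g) (X : Ω → A) (Z : Ω → B) :
    condEnt p X (fun ω => g (Z ω)) = condEnt p X Z := by
  have hpm : Function.Injective (fun t : A × B => (t.1, g t.2)) := by
    rintro ⟨a, b⟩ ⟨a', b'⟩ h
    simp only [Prod.mk.injEq] at h ⊢
    exact ⟨h.1, hg h.2⟩
  have h1 : ent p (fun ω => (X ω, g (Z ω))) = ent p (fun ω => (X ω, Z ω)) :=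
    ent_inj hpm (fun ω => (X ω, Z ω))
  have h2 : ent p (fun ω => g (Z ω)) = ent p Z := ent_inj hg Z
  rw [condEnt, condEnt, h1, h2]

lemma CondIndep.comp_equiv [Fintype C] {X : Ω → A} {Y : Ω → B} {Z : Ω → C} {C' : Type}
    (e : C ≃ C') (h : CondIndep p X Y Z) : CondIndep p X Y (fun ω => e (Z ω)) := by
  intro a b c
  have key := h a b (e.symm c)
  have h3 : distOf p (fun ω => (X ω, Y ω, e (Z ω))) (a, b, c)
      = distOf p (fun ω => (X ω, Y ω, Z ω)) (a, b, e.symm c) := by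
    have hinj : Function.Injective (fun t : A × B × C => (t.1, t.2.1, e t.2.2)) := by
      rintro ⟨x, y, z⟩ ⟨x', y', z'⟩ hh
      simp only [Prod.mk.injEq, e.injective.eq_iff] at hh ⊢
      tauto
    have := distOf_inj (p := p) hinj (fun ω => (X ω, Y ω, Z ω)) (a, b, e.symm c)
    simpa using this
  have h4 : distOf p (fun ω => e (Z ω)) c = distOf p Z (e.symm c) := by
    have := distOf_inj (p := p) e.injective Z (e.symm c)
    simpa using this
  have h5 : distOf p (fun ω => (X ω, e (Z ω))) (a, c)
      = distOf p (fun ω => (X ω, Z ω)) (a, e.symm c) := by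
    have hinj : Function.Injective (fun t : A × C => (t.1, e t.2)) := by
      rintro ⟨x, z⟩ ⟨x', z'⟩ hh
      simp only [Prod.mk.injEq, e.injective.eq_iff] at hh ⊢
      tauto
    have := distOf_inj (p := p) hinj (fun ω => (X ω, Z ω)) (a, e.symm c)
    simpa using this
  have h6 : distOf p (fun ω => (Y ω, e (Z ω))) (b, c)
      = distOf p (fun ω => (Y ω, Z ω)) (b, e.symm c) := by
    have hinj : Function.Injective (fun t : B × C => (t.1, e t.2)) := by
      rintro ⟨x, z⟩ ⟨x', z'⟩ hh
      simp only [Prod.mk.injEq, e.injective.eq_iff] at hh ⊢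
      tauto
    have := distOf_inj (p := p) hinj (fun ω => (Y ω, Z ω)) (b, e.symm c)
    simpa using this
  rw [h3, h4, h5, h6]
  exact key

end Aux4

section Aux5

open Classical
variable {Ω A B C D E : Type} [Fintype Ω] {p : Ω → ℝ}

lemma per_step_core [Fintype A] [Fintype B] [Fintype C] [Fintype D] [Fintype E]
    (hp : IsPMF p) (W : Ω → A) (Y : Ω → B) (S' : Ω → C) (Y' : Ω → D) (S : Ω → E)
    (h1 : CondIndep p W S' (fun ω => (Y' ω, Y ω, S ω)))
    (h2 : CondIndep p Y Y' (fun ω => (W ω, S ω))) :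
    condMI p W (fun ω => (Y ω, S' ω)) (fun ω => (Y' ω, S ω)) ≤ condMI p W Y S := by
  have hz1 := condMI_of_condIndep hp h1
  have hz2 := condMI_of_condIndep hp h2
  have hA : condEnt p W (fun ω => (S' ω, Y' ω, Y ω, S ω))
      = condEnt p W (fun ω => ((Y ω, S' ω), (Y' ω, S ω))) := by
    refine condEnt_comp (g := fun t : (B × C) × (D × E) => (t.1.2, t.2.1, t.1.1, t.2.2))
      ?_ W (fun ω => ((Y ω, S' ω), (Y' ω, S ω)))
    rintro ⟨⟨y, s'⟩, ⟨y', s⟩⟩ ⟨⟨z, t'⟩, ⟨z', t⟩⟩ h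
    simp only [Prod.mk.injEq] at h ⊢
    tauto
  have hB : condEnt p W (fun ω => (Y ω, Y' ω, S ω))
      = condEnt p W (fun ω => (Y' ω, Y ω, S ω)) := by
    refine condEnt_comp (g := fun t : D × B × E => (t.2.1, t.1, t.2.2))
      ?_ W (fun ω => (Y' ω, Y ω, S ω))
    rintro ⟨y', y, s⟩ ⟨z', z, t⟩ h
    simp only [Prod.mk.injEq] at h ⊢
    tauto
  have hC : condEnt p Y (fun ω => (W ω, Y' ω, S ω))
      = condEnt p Y (fun ω => (Y' ω, W ω, S ω)) := by
    refine condEnt_comp (g := fun t : D × A × E => (t.2.1, t.1, t.2.2))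
      ?_ Y (fun ω => (Y' ω, W ω, S ω))
    rintro ⟨y', w, s⟩ ⟨z', v, t⟩ h
    simp only [Prod.mk.injEq] at h ⊢
    tauto
  have hcomm1 : condMI p W Y (fun ω => (Y' ω, S ω)) = condMI p Y W (fun ω => (Y' ω, S ω)) :=
    condMI_comm W Y (fun ω => (Y' ω, S ω))
  have hcomm2 : condMI p W Y S = condMI p Y W S := condMI_comm W Y S
  have hnn : 0 ≤ condMI p Y Y' S := condMI_nonneg hp Y Y' S
  simp only [condMI] at hz1 hz2 hcomm1 hcomm2 hnn ⊢
  linarith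

end Aux5

/-- Regrouping equivalence: `(S_{[t]}, Y_{[t]}) ≃ (Y_{[t-1]}, Y_t, S_{[t]})`. -/
def snocEquiv (m : ℕ) (𝒮 𝒴 : Type) :
    ((Fin (m + 1) → 𝒮) × (Fin (m + 1) → 𝒴)) ≃ ((Fin m → 𝒴) × 𝒴 × (Fin (m + 1) → 𝒮)) where
  toFun x := (fun j => x.2 j.castSucc, x.2 (Fin.last m), x.1)
  invFun x := (x.2.2, Fin.snoc x.1 x.2.1)
  left_inv x := by
    refine Prod.ext rfl ?_
    exact Fin.snoc_init_self x.2
  right_inv x := by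
    refine Prod.ext ?_ (Prod.ext ?_ rfl)
    · funext j
      simp [Fin.snoc_castSucc]
    · simp [Fin.snoc_last]


/-- **Per-step bound (eq. (18)).** Let `W, S_1, …, S_{t+1}, Y_1, …, Y_t` be finite-valued
random variables (here `t = m + 1 ≥ 1`; `St j` denotes `S_{j+1}` for `j : Fin (m+2)` and
`Yt j` denotes `Y_{j+1}` for `j : Fin (m+1)`) such that (i) `W` is conditionally independent
of `S_{t+1}` given `(S_{[t]}, Y_{[t]})` and (ii) `Y_t` is conditionally independent of
`Y_{[t-1]}` given `(W, S_{[t]})`. Then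
`I(W ; Y_t, S_{t+1} | Y_{[t-1]}, S_{[t]}) ≤ I(W ; Y_t | S_{[t]})`. -/
theorem per_step_bound {Ω 𝒲 𝒮 𝒴 : Type} [Fintype Ω] [Fintype 𝒲] [Fintype 𝒮] [Fintype 𝒴]
    {m : ℕ} (p : Ω → ℝ) (hp : IsPMF p)
    (W : Ω → 𝒲) (St : Fin (m + 2) → Ω → 𝒮) (Yt : Fin (m + 1) → Ω → 𝒴)
    (h_i : CondIndep p W (St (Fin.last (m + 1)))
      (fun ω => (fun j : Fin (m + 1) => St j.castSucc ω, fun j : Fin (m + 1) => Yt j ω)))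
    (h_ii : CondIndep p (Yt (Fin.last m)) (fun ω => fun j : Fin m => Yt j.castSucc ω)
      (fun ω => (W ω, fun j : Fin (m + 1) => St j.castSucc ω))) :
    condMI p W (fun ω => (Yt (Fin.last m) ω, St (Fin.last (m + 1)) ω))
        (fun ω => (fun j : Fin m => Yt j.castSucc ω, fun j : Fin (m + 1) => St j.castSucc ω))
      ≤ condMI p W (Yt (Fin.last m)) (fun ω => fun j : Fin (m + 1) => St j.castSucc ω) := by
  have h1 : CondIndep p W (St (Fin.last (m + 1)))
      (fun ω => ((fun j : Fin m => Yt j.castSucc ω), Yt (Fin.last m) ω,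
        fun j : Fin (m + 1) => St j.castSucc ω)) :=
    h_i.comp_equiv (snocEquiv m 𝒮 𝒴)
  exact per_step_core hp W (Yt (Fin.last m)) (St (Fin.last (m + 1)))
    (fun ω => fun j : Fin m => Yt j.castSucc ω)
    (fun ω => fun j : Fin (m + 1) => St j.castSucc ω) h1 h_ii

end mac
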